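/- arXiv:1911.11965 — 4 statements merged into one kernel-verified Lean document; each statement's English description precedes it below -/
import Mathlib

section
/- Monte Carlo complexity bound: there exists a constant C > 0, depending only on α, γ, c_α, c_γ and V, such that for every ε ∈ (0,1), setting h := (ε/(√2·c_α))^{1/α} and N := ⌈2·V·ε^{-2}⌉, one has both (c_α·h^α)² + V/N ≤ ε² (the squared bias plus the statistical error is at most ε²) and N · c_γ · h^{-γ} ≤ C · ε^{-(2+γ/α)} (the total cost scales as ε^{-(2+γ/α)}). -/
open Real

/-- Monte Carlo complexity bound: there is a constant `C > 0` (depending only on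
`α, γ, c_α, c_γ, V`) such that for every `ε ∈ (0,1)`, with mesh size
`h = (ε/(√2·c_α))^{1/α}` and `N = ⌈2·V·ε⁻²⌉` samples, the squared bias plus the
statistical error is at most `ε²` and the total cost `N·c_γ·h^{-γ}` is at most
`C·ε^{-(2+γ/α)}`. -/
theorem mc_complexity_bound
    (α γ cα cγ V : ℝ) (hα : 0 < α) (hγ : 0 < γ) (hcα : 0 < cα) (hcγ : 0 < cγ)
    (hV : 0 < V) :
    ∃ C > 0, ∀ ε : ℝ, 0 < ε → ε < 1 →
      (cα * ((ε / (Real.sqrt 2 * cα)) ^ (1 / α)) ^ α) ^ 2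
          + V / (⌈2 * V * ε ^ (-2 : ℝ)⌉₊ : ℝ) ≤ ε ^ 2
        ∧ (⌈2 * V * ε ^ (-2 : ℝ)⌉₊ : ℝ) * cγ
              * ((ε / (Real.sqrt 2 * cα)) ^ (1 / α)) ^ (-γ)
            ≤ C * ε ^ (-(2 + γ / α)) := by
  have hs2 : (0:ℝ) < Real.sqrt 2 := Real.sqrt_pos.mpr (by norm_num)
  have hK0 : (0:ℝ) < Real.sqrt 2 * cα := mul_pos hs2 hcα
  refine ⟨(2*V+1)*cγ*(Real.sqrt 2 * cα)^(γ/α), by positivity, ?_⟩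
  intro ε hε hε1
  set K := Real.sqrt 2 * cα with hK
  have hb : 0 < ε / K := div_pos hε hK0
  have hA : ((ε / K) ^ (1/α)) ^ α = ε / K := by
    rw [← Real.rpow_mul hb.le, one_div, inv_mul_cancel₀ hα.ne', Real.rpow_one]
  have hepow : ε ^ (-2:ℝ) = (ε^2)⁻¹ := by
    rw [Real.rpow_neg hε.le, show ((2:ℝ) = ((2:ℕ):ℝ)) by norm_num, Real.rpow_natCast]
  have heps1 : (1:ℝ) ≤ ε ^ (-2:ℝ) := by
    rw [hepow]
    rw [le_inv_comm₀ one_pos (by positivity)]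
    nlinarith
  have hNlb : 2 * V * ε ^ (-2:ℝ) ≤ (⌈2 * V * ε ^ (-2 : ℝ)⌉₊ : ℝ) := Nat.le_ceil _
  have hNpos : (0:ℝ) < (⌈2 * V * ε ^ (-2 : ℝ)⌉₊ : ℝ) := by
    have : (0:ℝ) < 2 * V * ε ^ (-2:ℝ) := by positivity
    linarith
  have hsq2 : Real.sqrt 2 ^ 2 = 2 := Real.sq_sqrt (by norm_num)
  constructor
  · rw [hA]
    have h1 : (cα * (ε / K))^2 = ε^2/2 := by
      have hc : cα * (ε / K) = ε / Real.sqrt 2 := by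
        rw [hK]; field_simp
      rw [hc, div_pow, hsq2]
    have h2 : V / (⌈2 * V * ε ^ (-2 : ℝ)⌉₊ : ℝ) ≤ ε^2/2 := by
      have hd : (0:ℝ) < 2 * V * ε ^ (-2:ℝ) := by positivity
      have := div_le_div_of_nonneg_left hV.le hd hNlb
      calc V / (⌈2 * V * ε ^ (-2 : ℝ)⌉₊ : ℝ) ≤ V / (2 * V * ε ^ (-2:ℝ)) := by
            exact div_le_div_of_nonneg_left hV.le hd hNlb
        _ = ε^2/2 := by rw [hepow]; field_simp
    linarith
  · have hB : ((ε / K) ^ (1/α)) ^ (-γ) = ε ^ (-(γ/α)) * K ^ (γ/α) := by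
      rw [← Real.rpow_mul hb.le, Real.div_rpow hε.le hK0.le, one_div,
        show α⁻¹ * -γ = -(γ/α) by field_simp,
        Real.rpow_neg hK0.le, div_eq_mul_inv, inv_inv]
    rw [hB]
    have hNub : (⌈2 * V * ε ^ (-2 : ℝ)⌉₊ : ℝ) ≤ (2*V+1) * ε ^ (-2:ℝ) := by
      have := Nat.ceil_lt_add_one (show (0:ℝ) ≤ 2 * V * ε ^ (-2:ℝ) by positivity)
      nlinarith
    have hsplit : ε ^ (-(2 + γ / α)) = ε ^ (-2:ℝ) * ε ^ (-(γ/α)) := by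
      rw [← Real.rpow_add hε]; ring_nf
    rw [hsplit]
    have hKp : (0:ℝ) ≤ K ^ (γ/α) := by positivity
    have hEp : (0:ℝ) ≤ ε ^ (-(γ/α)) := by positivity
    calc (⌈2 * V * ε ^ (-2 : ℝ)⌉₊ : ℝ) * cγ * (ε ^ (-(γ/α)) * K ^ (γ/α))
        ≤ ((2*V+1) * ε ^ (-2:ℝ)) * cγ * (ε ^ (-(γ/α)) * K ^ (γ/α)) := by
          gcongr
      _ = (2*V+1)*cγ*K^(γ/α) * (ε ^ (-2:ℝ) * ε ^ (-(γ/α))) := by ring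
end

section
/- The MLMC sample numbers N_ℓ := ⌈2·ε^{-2}·√(V_ℓ/C_ℓ)·Σ_{i=0}^L √(V_i·C_i)⌉ make the statistical error at most ε²/2: Σ_{ℓ=0}^L V_ℓ/N_ℓ ≤ ε²/2. -/
open Real Finset

/-- The MLMC sample numbers
`N_ℓ = ⌈2·ε⁻²·√(V_ℓ/C_ℓ)·∑_{i=0}^L √(V_i·C_i)⌉` make the statistical error at
most `ε²/2`: `∑_{ℓ=0}^L V_ℓ/N_ℓ ≤ ε²/2`. -/
theorem mlmc_sample_numbers_statistical_error
    (L : ℕ) (V C : ℕ → ℝ)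
    (hV : ∀ ℓ ≤ L, 0 < V ℓ) (hC : ∀ ℓ ≤ L, 0 < C ℓ)
    (ε : ℝ) (hε : 0 < ε)
    (N : ℕ → ℕ)
    (hN : ∀ ℓ ≤ L, N ℓ =
      ⌈2 * ε ^ (-2 : ℝ) * Real.sqrt (V ℓ / C ℓ)
        * ∑ i ∈ range (L + 1), Real.sqrt (V i * C i)⌉₊) :
    ∑ ℓ ∈ range (L + 1), V ℓ / (N ℓ : ℝ) ≤ ε ^ 2 / 2 := by
  set S := ∑ i ∈ range (L + 1), Real.sqrt (V i * C i) with hS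
  have hε2 : ε ^ (-2 : ℝ) = (ε ^ 2)⁻¹ := by
    rw [show (-2 : ℝ) = ((-2 : ℤ) : ℝ) by norm_num, Real.rpow_intCast]
    rw [zpow_neg, zpow_two, sq]
  have hSpos : 0 < S := by
    apply Finset.sum_pos
    · intro i hi
      have hi' : i ≤ L := Nat.lt_succ_iff.mp (Finset.mem_range.mp hi)
      exact Real.sqrt_pos.mpr (mul_pos (hV i hi') (hC i hi'))
    · exact ⟨0, Finset.mem_range.mpr (Nat.succ_pos L)⟩
  have key : ∀ ℓ ∈ range (L + 1),
      V ℓ / (N ℓ : ℝ) ≤ ε ^ 2 * Real.sqrt (V ℓ * C ℓ) / (2 * S) := by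
    intro ℓ hℓ
    have hℓ' : ℓ ≤ L := Nat.lt_succ_iff.mp (Finset.mem_range.mp hℓ)
    have hVℓ := hV ℓ hℓ'
    have hCℓ := hC ℓ hℓ'
    have ha : 0 < Real.sqrt (V ℓ / C ℓ) := Real.sqrt_pos.mpr (div_pos hVℓ hCℓ)
    have hb : 0 < Real.sqrt (V ℓ * C ℓ) := Real.sqrt_pos.mpr (mul_pos hVℓ hCℓ)
    have hx : 0 < 2 * ε ^ (-2 : ℝ) * Real.sqrt (V ℓ / C ℓ) * S := by
      rw [hε2]; positivity
    have hNge : 2 * ε ^ (-2 : ℝ) * Real.sqrt (V ℓ / C ℓ) * S ≤ (N ℓ : ℝ) := by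
      rw [hN ℓ hℓ']
      exact Nat.le_ceil _
    have hab : Real.sqrt (V ℓ / C ℓ) * Real.sqrt (V ℓ * C ℓ) = V ℓ := by
      rw [← Real.sqrt_mul (by positivity)]
      rw [show V ℓ / C ℓ * (V ℓ * C ℓ) = (V ℓ) ^ 2 by field_simp]
      exact Real.sqrt_sq hVℓ.le
    have h1 : V ℓ / (N ℓ : ℝ) ≤ V ℓ / (2 * ε ^ (-2 : ℝ) * Real.sqrt (V ℓ / C ℓ) * S) :=
      div_le_div_of_nonneg_left hVℓ.le hx hNge
    refine h1.trans_eq ?_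
    rw [hε2]
    rw [div_eq_div_iff (by positivity) (by positivity)]
    have hinv : ε ^ 2 * (ε ^ 2)⁻¹ = 1 := mul_inv_cancel₀ (by positivity)
    linear_combination (-2 * S * (ε ^ 2 * (ε ^ 2)⁻¹)) * hab + (-2 * S * V ℓ) * hinv
  calc ∑ ℓ ∈ range (L + 1), V ℓ / (N ℓ : ℝ)
      ≤ ∑ ℓ ∈ range (L + 1), ε ^ 2 * Real.sqrt (V ℓ * C ℓ) / (2 * S) :=
        Finset.sum_le_sum key
    _ = ε ^ 2 * S / (2 * S) := by
        rw [← Finset.sum_div, ← Finset.mul_sum]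
    _ = ε ^ 2 / 2 := by
        rw [mul_comm 2 S, ← div_div, mul_div_assoc, div_self hSpos.ne', mul_one]
end

section
/- MLMC complexity bound, variance-dominated regime: assume β > γ and α ≥ γ/2. Then there exists a constant C > 0, depending only on s, α, β, γ, c_α, c_β, c_γ, such that for every ε ∈ (0, √2·c_α), setting L := ⌈(1/α)·log_s(√2·c_α/ε)⌉, V_ℓ := c_β·s^{-β·ℓ}, C_ℓ := c_γ·s^{γ·ℓ}, and N_ℓ := ⌈2·ε^{-2}·√(V_ℓ/C_ℓ)·Σ_{i=0}^L √(V_i·C_i)⌉, the total MLMC cost satisfies Σ_{ℓ=0}^L N_ℓ·C_ℓ ≤ C·ε^{-2}. -/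
open Real Finset

/-- MLMC complexity bound in the variance-dominated regime (`β > γ`,
`α ≥ γ/2`): there is a constant `C > 0` depending only on
`s, α, β, γ, c_α, c_β, c_γ` such that for every `ε ∈ (0, √2·c_α)`, with
`L = ⌈(1/α)·log_s(√2·c_α/ε)⌉`, `V_ℓ = c_β·s^{-β·ℓ}`, `C_ℓ = c_γ·s^{γ·ℓ}` and
`N_ℓ = ⌈2·ε⁻²·√(V_ℓ/C_ℓ)·∑_{i=0}^L √(V_i·C_i)⌉`, the total MLMC cost
satisfies `∑_{ℓ=0}^L N_ℓ·C_ℓ ≤ C·ε⁻²`. -/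
theorem mlmc_complexity_variance_dominated
    (s α β γ cα cβ cγ : ℝ) (hs : 1 < s) (hα : 0 < α) (hβ : 0 < β) (hγ : 0 < γ)
    (hcα : 0 < cα) (hcβ : 0 < cβ) (hcγ : 0 < cγ)
    (hβγ : γ < β) (hαγ : γ / 2 ≤ α) :
    ∃ C > 0, ∀ ε : ℝ, 0 < ε → ε < Real.sqrt 2 * cα →
      ∀ L : ℕ, L = ⌈(1 / α) * Real.logb s (Real.sqrt 2 * cα / ε)⌉₊ →
      ∀ V Cost : ℕ → ℝ,
        (∀ ℓ, V ℓ = cβ * s ^ (-(β * (ℓ : ℝ)))) →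
        (∀ ℓ, Cost ℓ = cγ * s ^ (γ * (ℓ : ℝ))) →
      ∀ N : ℕ → ℕ,
        (∀ ℓ, N ℓ = ⌈2 * ε ^ (-2 : ℝ) * Real.sqrt (V ℓ / Cost ℓ)
          * ∑ i ∈ range (L + 1), Real.sqrt (V i * Cost i)⌉₊) →
      ∑ ℓ ∈ range (L + 1), (N ℓ : ℝ) * Cost ℓ ≤ C * ε ^ (-2 : ℝ) := by
  have hs0 : (0:ℝ) < s := lt_trans one_pos hs
  have hpow : ∀ (e : ℝ) (n : ℕ), (s ^ e) ^ n = s ^ (e * (n : ℝ)) := by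
    intro e n
    rw [← Real.rpow_natCast (s ^ e) n, ← Real.rpow_mul hs0.le]
  set r : ℝ := s ^ (-((β - γ) / 2)) with hr_def
  have hr0 : 0 < r := Real.rpow_pos_of_pos hs0 _
  have hr1 : r < 1 := Real.rpow_lt_one_of_one_lt_of_neg hs (by linarith)
  have h1r : 0 < 1 - r := by linarith
  have hK1 : 0 < Real.sqrt (cβ * cγ) := Real.sqrt_pos.2 (by positivity)
  set Sb : ℝ := Real.sqrt (cβ * cγ) / (1 - r) with hSb_def
  have hSb : 0 < Sb := div_pos hK1 h1r
  set q : ℝ := s ^ γ with hq_def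
  have hq1 : 1 < q := (Real.one_lt_rpow_iff_of_pos hs0).2 (Or.inl ⟨hs, hγ⟩)
  have hq0 : 0 < q - 1 := by linarith
  have hs2γ : 0 < s ^ (2 * γ) := Real.rpow_pos_of_pos hs0 _
  refine ⟨2 * Sb ^ 2 + cγ * s ^ (2 * γ) * (2 * cα ^ 2) / (q - 1),
    add_pos (by positivity) (div_pos (by positivity) hq0), ?_⟩
  intro ε hε hεu L hL V Cost hV hCost N hN
  have hε2 : 0 < ε ^ (-2 : ℝ) := Real.rpow_pos_of_pos hε _
  set E : ℝ := Real.sqrt 2 * cα / ε with hE_def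
  have hE1 : 1 < E := (one_lt_div hε).2 hεu
  have hE0 : 0 < E := lt_trans one_pos hE1
  have hCostpos : ∀ ℓ, 0 < Cost ℓ := fun ℓ => by
    rw [hCost]; exact mul_pos hcγ (Real.rpow_pos_of_pos hs0 _)
  have hVpos : ∀ ℓ, 0 < V ℓ := fun ℓ => by
    rw [hV]; exact mul_pos hcβ (Real.rpow_pos_of_pos hs0 _)
  -- √(V i · Cost i) = √(cβ cγ) · r ^ i
  have hsqVC : ∀ i : ℕ, Real.sqrt (V i * Cost i) = Real.sqrt (cβ * cγ) * r ^ i := by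
    intro i
    have key : V i * Cost i = (Real.sqrt (cβ * cγ) * r ^ i) ^ 2 := by
      have h1 : (Real.sqrt (cβ * cγ)) ^ 2 = cβ * cγ := Real.sq_sqrt (by positivity)
      have h2 : (r ^ i) ^ 2 = s ^ ((-((β - γ) / 2)) * ((i : ℝ) * 2)) := by
        rw [← pow_mul, hr_def, hpow]
        push_cast
        ring_nf
      rw [mul_pow, h1, h2, hV, hCost,
        show (-((β - γ) / 2)) * ((i : ℝ) * 2) = (-(β * (i : ℝ))) + γ * (i : ℝ) by ring,
        Real.rpow_add hs0]
      ring
    rw [key, Real.sqrt_sq (mul_nonneg (Real.sqrt_nonneg _) (pow_nonneg hr0.le i))]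
  have hdivmul : ∀ ℓ : ℕ, Real.sqrt (V ℓ / Cost ℓ) * Cost ℓ = Real.sqrt (V ℓ * Cost ℓ) := by
    intro ℓ
    rw [Real.sqrt_div (hVpos ℓ).le, div_mul_eq_mul_div, mul_div_assoc,
      Real.div_sqrt, ← Real.sqrt_mul (hVpos ℓ).le]
  set S : ℝ := ∑ i ∈ range (L + 1), Real.sqrt (V i * Cost i) with hS_def
  have hS0 : 0 ≤ S := sum_nonneg fun i _ => Real.sqrt_nonneg _
  have hNle : ∀ ℓ, (N ℓ : ℝ) ≤ 2 * ε ^ (-2 : ℝ) * Real.sqrt (V ℓ / Cost ℓ) * S + 1 := by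
    intro ℓ
    rw [hN]
    exact le_of_lt (Nat.ceil_lt_add_one
      (mul_nonneg (mul_nonneg (by positivity) (Real.sqrt_nonneg _)) hS0))
  have hsum1 : ∑ ℓ ∈ range (L + 1), (N ℓ : ℝ) * Cost ℓ
      ≤ 2 * ε ^ (-2 : ℝ) * S * S + ∑ ℓ ∈ range (L + 1), Cost ℓ := by
    calc ∑ ℓ ∈ range (L + 1), (N ℓ : ℝ) * Cost ℓ
        ≤ ∑ ℓ ∈ range (L + 1),
            ((2 * ε ^ (-2 : ℝ) * Real.sqrt (V ℓ / Cost ℓ) * S + 1) * Cost ℓ) :=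
          sum_le_sum fun ℓ _ => mul_le_mul_of_nonneg_right (hNle ℓ) (hCostpos ℓ).le
      _ = (∑ ℓ ∈ range (L + 1), 2 * ε ^ (-2 : ℝ) * S * Real.sqrt (V ℓ * Cost ℓ))
            + ∑ ℓ ∈ range (L + 1), Cost ℓ := by
          rw [← sum_add_distrib]
          refine sum_congr rfl fun ℓ _ => ?_
          rw [add_mul, one_mul, ← hdivmul ℓ]
          ring
      _ = 2 * ε ^ (-2 : ℝ) * S * S + ∑ ℓ ∈ range (L + 1), Cost ℓ := by
          rw [← mul_sum, ← hS_def]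
  have hSle : S ≤ Sb := by
    have hSeq : S = Real.sqrt (cβ * cγ) * ∑ i ∈ range (L + 1), r ^ i := by
      rw [hS_def, mul_sum]
      exact sum_congr rfl fun i _ => hsqVC i
    rw [hSeq, hSb_def, div_eq_mul_inv]
    refine mul_le_mul_of_nonneg_left ?_ (Real.sqrt_nonneg _)
    rw [geom_sum_eq hr1.ne (L + 1), inv_eq_one_div,
      show r ^ (L + 1) - 1 = -(1 - r ^ (L + 1)) by ring,
      show r - 1 = -(1 - r) by ring, neg_div_neg_eq]
    have : 0 ≤ r ^ (L + 1) := pow_nonneg hr0.le _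
    gcongr
    linarith
  have hCosteq : ∀ ℓ : ℕ, Cost ℓ = cγ * q ^ ℓ := fun ℓ => by
    rw [hCost, hq_def, hpow]
  have hCostsum : ∑ ℓ ∈ range (L + 1), Cost ℓ ≤ cγ * q ^ (L + 1) / (q - 1) := by
    calc ∑ ℓ ∈ range (L + 1), Cost ℓ = cγ * ((q ^ (L + 1) - 1) / (q - 1)) := by
          simp_rw [hCosteq]
          rw [← mul_sum, geom_sum_eq hq1.ne' (L + 1)]
      _ ≤ cγ * q ^ (L + 1) / (q - 1) := by
          rw [mul_div_assoc]
          gcongr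
          linarith
  -- bound on L and on q ^ (L+1)
  have hx0 : 0 ≤ (1 / α) * Real.logb s E :=
    mul_nonneg (by positivity) (Real.logb_nonneg hs hE1.le)
  have hLle : (L : ℝ) ≤ (1 / α) * Real.logb s E + 1 := by
    rw [hL]
    exact (Nat.ceil_lt_add_one hx0).le
  have hεr : ε ^ (-2 : ℝ) = (ε ^ 2)⁻¹ := by
    rw [Real.rpow_neg hε.le, show ((2 : ℝ) = ((2 : ℕ) : ℝ)) by norm_num,
      Real.rpow_natCast]
  have hqL : q ^ (L + 1) ≤ s ^ (2 * γ) * (2 * cα ^ 2 * ε ^ (-2 : ℝ)) := by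
    have e1 : q ^ (L + 1) = s ^ (γ * ((L : ℝ) + 1)) := by
      rw [hq_def, hpow]
      push_cast
      ring_nf
    have e2 : s ^ (γ * ((L : ℝ) + 1)) ≤ s ^ ((γ / α) * Real.logb s E + 2 * γ) := by
      apply Real.rpow_le_rpow_of_exponent_le hs.le
      have : γ * ((L : ℝ) + 1) ≤ γ * ((1 / α) * Real.logb s E + 2) := by
        apply mul_le_mul_of_nonneg_left _ hγ.le
        linarith
      calc γ * ((L : ℝ) + 1) ≤ γ * ((1 / α) * Real.logb s E + 2) := this
        _ = (γ / α) * Real.logb s E + 2 * γ := by ring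
    have e3 : s ^ ((γ / α) * Real.logb s E + 2 * γ)
        = s ^ (2 * γ) * E ^ (γ / α) := by
      rw [Real.rpow_add hs0, mul_comm (γ / α), Real.rpow_mul hs0.le,
        Real.rpow_logb hs0 hs.ne' hE0]
      ring
    have e4 : E ^ (γ / α) ≤ E ^ (2 : ℝ) := by
      apply Real.rpow_le_rpow_of_exponent_le hE1.le
      rw [div_le_iff₀ hα]
      linarith
    have e5 : E ^ (2 : ℝ) = 2 * cα ^ 2 * ε ^ (-2 : ℝ) := by
      have h2 : E ^ (2 : ℝ) = E ^ (2 : ℕ) := by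
        rw [← Real.rpow_natCast E 2]
        norm_num
      rw [h2, hεr, hE_def, div_pow, mul_pow, Real.sq_sqrt (by norm_num : (0:ℝ) ≤ 2)]
      ring
    calc q ^ (L + 1) = s ^ (γ * ((L : ℝ) + 1)) := e1
      _ ≤ s ^ ((γ / α) * Real.logb s E + 2 * γ) := e2
      _ = s ^ (2 * γ) * E ^ (γ / α) := e3
      _ ≤ s ^ (2 * γ) * E ^ (2 : ℝ) := by
          exact mul_le_mul_of_nonneg_left e4 hs2γ.le
      _ = s ^ (2 * γ) * (2 * cα ^ 2 * ε ^ (-2 : ℝ)) := by rw [e5]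
  have hA : 2 * ε ^ (-2 : ℝ) * S * S ≤ 2 * Sb ^ 2 * ε ^ (-2 : ℝ) := by
    have hSS : S * S ≤ Sb * Sb := mul_le_mul hSle hSle hS0 hSb.le
    calc 2 * ε ^ (-2 : ℝ) * S * S = 2 * ε ^ (-2 : ℝ) * (S * S) := by ring
      _ ≤ 2 * ε ^ (-2 : ℝ) * (Sb * Sb) :=
          mul_le_mul_of_nonneg_left hSS (mul_nonneg (by norm_num) hε2.le)
      _ = 2 * Sb ^ 2 * ε ^ (-2 : ℝ) := by ring
  have hB : cγ * q ^ (L + 1) / (q - 1)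
      ≤ cγ * s ^ (2 * γ) * (2 * cα ^ 2) / (q - 1) * ε ^ (-2 : ℝ) := by
    rw [show cγ * s ^ (2 * γ) * (2 * cα ^ 2) / (q - 1) * ε ^ (-2 : ℝ)
        = cγ * (s ^ (2 * γ) * (2 * cα ^ 2 * ε ^ (-2 : ℝ))) / (q - 1) by ring]
    gcongr
  calc ∑ ℓ ∈ range (L + 1), (N ℓ : ℝ) * Cost ℓ
      ≤ 2 * ε ^ (-2 : ℝ) * S * S + ∑ ℓ ∈ range (L + 1), Cost ℓ := hsum1
    _ ≤ 2 * Sb ^ 2 * ε ^ (-2 : ℝ)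
        + cγ * s ^ (2 * γ) * (2 * cα ^ 2) / (q - 1) * ε ^ (-2 : ℝ) := by
        have := hCostsum
        linarith
    _ = (2 * Sb ^ 2 + cγ * s ^ (2 * γ) * (2 * cα ^ 2) / (q - 1)) * ε ^ (-2 : ℝ) := by
        ring
end

section
/- MLMC complexity bound, cost-dominated regime: assume β < γ and α ≥ β/2. Then there exists a constant C > 0, depending only on s, α, β, γ, c_α, c_β, c_γ, such that for every ε ∈ (0, √2·c_α), setting L := ⌈(1/α)·log_s(√2·c_α/ε)⌉, V_ℓ := c_β·s^{-β·ℓ}, C_ℓ := c_γ·s^{γ·ℓ}, and N_ℓ := ⌈2·ε^{-2}·√(V_ℓ/C_ℓ)·Σ_{i=0}^L √(V_i·C_i)⌉, the total MLMC cost satisfies Σ_{ℓ=0}^L N_ℓ·C_ℓ ≤ C·ε^{-2−(γ−β)/α}. -/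
open Real Finset

/-!
Rounding the sample sizes up costs at most one sample per level, so the total cost is at most
`2ε⁻² (∑ √(V_ℓ C_ℓ))² + ∑ C_ℓ`. Since `β < γ`, both sums are geometric and dominated by their
top level, and the choice of `L` gives `s^L ≤ s · (√2 c_α / ε)^(1/α)`. The first term is then
`O(ε^(-2-(γ-β)/α))` and the second `O(ε^(-γ/α))`, and `β ≤ 2α` makes the first exponent the
larger one.
-/

lemma geom_sum_range_succ_le_of_one_lt {q : ℝ} (hq : 1 < q) (n : ℕ) :
    ∑ i ∈ range (n + 1), q ^ i ≤ q / (q - 1) * q ^ n := by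
  have hq1 : 0 < q - 1 := by linarith
  rw [geom_sum_eq hq.ne', div_mul_eq_mul_div, pow_succ']
  exact div_le_div_of_nonneg_right (by linarith) hq1.le

lemma sum_range_succ_rpow_mul_le {s c : ℝ} (hs : 1 < s) (hc : 0 < c) (n : ℕ) :
    ∑ i ∈ range (n + 1), s ^ (c * i) ≤ s ^ c / (s ^ c - 1) * s ^ (c * n) := by
  have hpow : ∀ k : ℕ, s ^ (c * k) = (s ^ c) ^ k := fun k => by
    rw [rpow_mul (by linarith), rpow_natCast]
  simp only [hpow]
  exact geom_sum_range_succ_le_of_one_lt (one_lt_rpow hs hc) n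

lemma rpow_mul_ceil_logb_le {s α c x : ℝ} (hs : 1 < s) (hα : 0 < α) (hc : 0 ≤ c)
    (hx : 1 ≤ x) : s ^ (c * ⌈(1 / α) * logb s x⌉₊) ≤ s ^ c * x ^ (c / α) := by
  have hlog : 0 ≤ (1 / α) * logb s x := by
    have := logb_nonneg hs hx
    positivity
  have hceil : c * ⌈(1 / α) * logb s x⌉₊ ≤ c + logb s x * (c / α) := by
    calc c * ⌈(1 / α) * logb s x⌉₊ ≤ c * ((1 / α) * logb s x + 1) :=
          mul_le_mul_of_nonneg_left (Nat.ceil_lt_add_one hlog).le hc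
      _ = c + logb s x * (c / α) := by ring
  calc s ^ (c * ⌈(1 / α) * logb s x⌉₊) ≤ s ^ (c + logb s x * (c / α)) :=
        rpow_le_rpow_of_exponent_le hs.le hceil
    _ = s ^ c * x ^ (c / α) := by
        rw [rpow_add (by linarith), rpow_mul (by linarith),
          rpow_logb (by linarith) hs.ne' (by linarith)]

lemma sum_range_ceil_logb_rpow_mul_le {s α c x : ℝ} (hs : 1 < s) (hα : 0 < α) (hc : 0 < c)
    (hx : 1 ≤ x) :
    ∑ i ∈ range (⌈(1 / α) * logb s x⌉₊ + 1), s ^ (c * i)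
      ≤ s ^ c / (s ^ c - 1) * s ^ c * x ^ (c / α) := by
  have hK : 0 ≤ s ^ c / (s ^ c - 1) := by
    have := one_lt_rpow hs hc
    exact div_nonneg (by linarith) (by linarith)
  calc _ ≤ s ^ c / (s ^ c - 1) * s ^ (c * ⌈(1 / α) * logb s x⌉₊) :=
        sum_range_succ_rpow_mul_le hs hc _
    _ ≤ s ^ c / (s ^ c - 1) * (s ^ c * x ^ (c / α)) :=
        mul_le_mul_of_nonneg_left (rpow_mul_ceil_logb_le hs hα hc.le hx) hK
    _ = _ := by ring

lemma sqrt_div_mul_self {v c : ℝ} (hv : 0 ≤ v) (hc : 0 < c) : √(v / c) * c = √(v * c) := by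
  have hc' : √c ≠ 0 := (sqrt_pos.mpr hc).ne'
  rw [sqrt_div hv, sqrt_mul hv, div_mul_eq_mul_div, div_eq_iff hc', mul_assoc,
    mul_self_sqrt hc.le]

lemma Nat.ceil_mul_sqrt_div_mul_le {a b v c : ℝ} (hab : 0 ≤ a * b) (hv : 0 ≤ v) (hc : 0 < c) :
    ⌈a * √(v / c) * b⌉₊ * c ≤ a * b * √(v * c) + c := by
  have hceil : (⌈a * √(v / c) * b⌉₊ : ℝ) ≤ a * √(v / c) * b + 1 :=
    (Nat.ceil_lt_add_one (by nlinarith [sqrt_nonneg (v / c)])).le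
  calc (⌈a * √(v / c) * b⌉₊ : ℝ) * c ≤ (a * √(v / c) * b + 1) * c :=
        mul_le_mul_of_nonneg_right hceil hc.le
    _ = a * b * (√(v / c) * c) + c := by ring
    _ = a * b * √(v * c) + c := by rw [sqrt_div_mul_self hv hc]

lemma sum_nat_ceil_mul_sqrt_div_mul_le {ι : Type*} (t : Finset ι) (V C : ι → ℝ) {a : ℝ}
    (ha : 0 ≤ a) (hV : ∀ i ∈ t, 0 ≤ V i) (hC : ∀ i ∈ t, 0 < C i) :
    ∑ i ∈ t, (⌈a * √(V i / C i) * ∑ j ∈ t, √(V j * C j)⌉₊ : ℝ) * C i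
      ≤ a * (∑ j ∈ t, √(V j * C j)) ^ 2 + ∑ i ∈ t, C i := by
  set S := ∑ j ∈ t, √(V j * C j)
  have hS : 0 ≤ S := sum_nonneg fun j _ => sqrt_nonneg _
  calc _ ≤ ∑ i ∈ t, (a * S * √(V i * C i) + C i) :=
        sum_le_sum fun i hi => Nat.ceil_mul_sqrt_div_mul_le (mul_nonneg ha hS) (hV i hi) (hC i hi)
    _ = a * S ^ 2 + ∑ i ∈ t, C i := by
        rw [sum_add_distrib, ← mul_sum, sq, mul_assoc]

lemma sqrt_mul_rpow_neg_mul_mul_rpow_mul {s a b : ℝ} (hs : 0 < s) (hab : 0 ≤ a * b)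
    (β γ t : ℝ) :
    √(a * s ^ (-(β * t)) * (b * s ^ (γ * t))) = √(a * b) * s ^ ((γ - β) / 2 * t) := by
  have hsq : a * s ^ (-(β * t)) * (b * s ^ (γ * t)) = a * b * (s ^ ((γ - β) / 2 * t)) ^ 2 := by
    rw [← rpow_natCast, ← rpow_mul hs.le, mul_mul_mul_comm, ← rpow_add hs]
    congr 2
    push_cast
    ring
  rw [hsq, sqrt_mul hab, sqrt_sq (rpow_nonneg hs.le _)]

lemma sq_sum_range_ceil_logb_sqrt_mul_le {s α β γ a b x : ℝ} (hs : 1 < s) (hα : 0 < α)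
    (hβγ : β < γ) (hab : 0 ≤ a * b) (hx : 1 ≤ x) :
    (∑ i ∈ range (⌈(1 / α) * logb s x⌉₊ + 1), √(a * s ^ (-(β * i)) * (b * s ^ (γ * i)))) ^ 2
      ≤ a * b * (s ^ ((γ - β) / 2) / (s ^ ((γ - β) / 2) - 1) * s ^ ((γ - β) / 2)) ^ 2
        * x ^ ((γ - β) / α) := by
  have hδ : 0 < (γ - β) / 2 := by linarith
  have hsq : (x ^ ((γ - β) / 2 / α)) ^ 2 = x ^ ((γ - β) / α) := by
    rw [← rpow_mul_natCast (by linarith)]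
    congr 1
    push_cast
    ring
  simp only [sqrt_mul_rpow_neg_mul_mul_rpow_mul (by linarith : 0 < s) hab, ← mul_sum]
  calc _ ≤ (√(a * b) * (s ^ ((γ - β) / 2) / (s ^ ((γ - β) / 2) - 1) * s ^ ((γ - β) / 2)
          * x ^ ((γ - β) / 2 / α))) ^ 2 := by
        gcongr
        exact sum_range_ceil_logb_rpow_mul_le hs hα hδ hx
    _ = _ := by rw [mul_pow, sq_sqrt hab, ← hsq]; ring

lemma rpow_neg_two_mul_add_le {M ε p q A B : ℝ} (hε : 0 < ε) (hεM : ε ≤ M) (hB : 0 ≤ B)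
    (hq : q ≤ 2 + p) :
    ε ^ (-2 : ℝ) * A * (M / ε) ^ p + B * (M / ε) ^ q
      ≤ (A * M ^ p + B * M ^ (2 + p)) * ε ^ (-2 - p) := by
  have hM : 0 ≤ M := by linarith
  have hdiv : ∀ t : ℝ, (M / ε) ^ t = M ^ t * ε ^ (-t) := fun t => by
    rw [div_rpow hM hε.le, rpow_neg hε.le, div_eq_mul_inv]
  have hdom : (M / ε) ^ q ≤ (M / ε) ^ (2 + p) :=
    rpow_le_rpow_of_exponent_le ((one_le_div hε).mpr hεM) hq
  calc _ ≤ ε ^ (-2 : ℝ) * A * (M / ε) ^ p + B * (M / ε) ^ (2 + p) := by gcongr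
    _ = (A * M ^ p + B * M ^ (2 + p)) * ε ^ (-2 - p) := by
        rw [hdiv, hdiv, show -2 - p = -2 + -p by ring, show -(2 + p) = -2 + -p by ring,
          rpow_add hε]
        ring

theorem mlmc_complexity_cost_dominated_general
    (s α β γ cα cβ cγ : ℝ) (hs : 1 < s) (hα : 0 < α) (hγ : 0 < γ)
    (hcα : 0 < cα) (hcβ : 0 < cβ) (hcγ : 0 < cγ)
    (hβγ : β < γ) (hαβ : β / 2 ≤ α) :
    ∃ C > 0, ∀ ε : ℝ, 0 < ε → ε < Real.sqrt 2 * cα →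
      ∀ L : ℕ, L = ⌈(1 / α) * Real.logb s (Real.sqrt 2 * cα / ε)⌉₊ →
      ∀ V Cost : ℕ → ℝ,
        (∀ ℓ, V ℓ = cβ * s ^ (-(β * (ℓ : ℝ)))) →
        (∀ ℓ, Cost ℓ = cγ * s ^ (γ * (ℓ : ℝ))) →
      ∀ N : ℕ → ℕ,
        (∀ ℓ, N ℓ = ⌈2 * ε ^ (-2 : ℝ) * Real.sqrt (V ℓ / Cost ℓ)
          * ∑ i ∈ range (L + 1), Real.sqrt (V i * Cost i)⌉₊) →
      ∑ ℓ ∈ range (L + 1), (N ℓ : ℝ) * Cost ℓ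
        ≤ C * ε ^ (-2 - (γ - β) / α) := by
  set Kr := s ^ ((γ - β) / 2) / (s ^ ((γ - β) / 2) - 1) * s ^ ((γ - β) / 2)
  set Ku := s ^ γ / (s ^ γ - 1) * s ^ γ
  have hKr : 0 < Kr := by have := one_lt_rpow hs (by linarith : 0 < (γ - β) / 2); positivity
  have hKu : 0 < Ku := by have := one_lt_rpow hs hγ; positivity
  set M := √2 * cα
  refine ⟨2 * (cβ * cγ * Kr ^ 2) * M ^ ((γ - β) / α) + cγ * Ku * M ^ (2 + (γ - β) / α),
    by positivity, ?_⟩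
  intro ε hε hεM L hL V Cost hV hC N hN
  have hx : 1 ≤ M / ε := (one_le_div hε).mpr hεM.le
  have hS : (∑ i ∈ range (L + 1), √(V i * Cost i)) ^ 2
      ≤ cβ * cγ * Kr ^ 2 * (M / ε) ^ ((γ - β) / α) := by
    simp only [hL, hV, hC]
    exact sq_sum_range_ceil_logb_sqrt_mul_le hs hα hβγ (mul_pos hcβ hcγ).le hx
  have hCost : ∑ i ∈ range (L + 1), Cost i ≤ cγ * (Ku * (M / ε) ^ (γ / α)) := by
    simp only [hL, hC, ← mul_sum]
    exact mul_le_mul_of_nonneg_left (sum_range_ceil_logb_rpow_mul_le hs hα hγ hx) hcγ.le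
  have hexp : γ / α ≤ 2 + (γ - β) / α := by rw [div_le_iff₀ hα]; field_simp; linarith
  calc ∑ ℓ ∈ range (L + 1), (N ℓ : ℝ) * Cost ℓ
      ≤ 2 * ε ^ (-2 : ℝ) * (∑ i ∈ range (L + 1), √(V i * Cost i)) ^ 2
        + ∑ i ∈ range (L + 1), Cost i := by
        simp only [hN]
        exact sum_nat_ceil_mul_sqrt_div_mul_le _ V Cost (by positivity)
          (fun i _ => by rw [hV]; positivity) (fun i _ => by rw [hC]; positivity)
    _ ≤ 2 * ε ^ (-2 : ℝ) * (cβ * cγ * Kr ^ 2 * (M / ε) ^ ((γ - β) / α))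
        + cγ * (Ku * (M / ε) ^ (γ / α)) := by gcongr
    _ = ε ^ (-2 : ℝ) * (2 * (cβ * cγ * Kr ^ 2)) * (M / ε) ^ ((γ - β) / α)
        + cγ * Ku * (M / ε) ^ (γ / α) := by ring
    _ ≤ _ := rpow_neg_two_mul_add_le hε hεM.le (by positivity) hexp

/-- MLMC complexity bound in the cost-dominated regime (`β < γ`, `α ≥ β/2`):
there is a constant `C > 0` depending only on `s, α, β, γ, c_α, c_β, c_γ` such
that for every `ε ∈ (0, √2·c_α)`, with `L = ⌈(1/α)·log_s(√2·c_α/ε)⌉`,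
`V_ℓ = c_β·s^{-β·ℓ}`, `C_ℓ = c_γ·s^{γ·ℓ}` and
`N_ℓ = ⌈2·ε⁻²·√(V_ℓ/C_ℓ)·∑_{i=0}^L √(V_i·C_i)⌉`, the total MLMC cost
satisfies `∑_{ℓ=0}^L N_ℓ·C_ℓ ≤ C·ε^{−2−(γ−β)/α}`. -/
theorem mlmc_complexity_cost_dominated
    (s α β γ cα cβ cγ : ℝ) (hs : 1 < s) (hα : 0 < α) (hβ : 0 < β) (hγ : 0 < γ)
    (hcα : 0 < cα) (hcβ : 0 < cβ) (hcγ : 0 < cγ)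
    (hβγ : β < γ) (hαβ : β / 2 ≤ α) :
    ∃ C > 0, ∀ ε : ℝ, 0 < ε → ε < Real.sqrt 2 * cα →
      ∀ L : ℕ, L = ⌈(1 / α) * Real.logb s (Real.sqrt 2 * cα / ε)⌉₊ →
      ∀ V Cost : ℕ → ℝ,
        (∀ ℓ, V ℓ = cβ * s ^ (-(β * (ℓ : ℝ)))) →
        (∀ ℓ, Cost ℓ = cγ * s ^ (γ * (ℓ : ℝ))) →
      ∀ N : ℕ → ℕ,
        (∀ ℓ, N ℓ = ⌈2 * ε ^ (-2 : ℝ) * Real.sqrt (V ℓ / Cost ℓ)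
          * ∑ i ∈ range (L + 1), Real.sqrt (V i * Cost i)⌉₊) →
      ∑ ℓ ∈ range (L + 1), (N ℓ : ℝ) * Cost ℓ
        ≤ C * ε ^ (-2 - (γ - β) / α) :=
  mlmc_complexity_cost_dominated_general s α β γ cα cβ cγ hs hα hγ hcα hcβ hcγ hβγ hαβ
end
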